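/- The map g(x) = (2x₂/(1+x₁), 2√(1-|x|²)/(1+x₁)) is an isometry from the Funk model (D, F_F) to the Finsler–Poincaré upper half plane (H, F_H): for all x ∈ D and v ∈ ℝ², F_F(x,v) = F_H(g(x), Dg_x(v)). -/

import Mathlib

noncomputable section

/-- The Euclidean plane. -/
abbrev E2 := EuclideanSpace ℝ (Fin 2)

/-- The open unit disk. -/
def Dset : Set E2 := {x | ‖x‖ < 1}

/-- The upper half plane. -/
def Hset : Set E2 := {x | x 1 > 0}

/-- g(x) = (2x₂/(1+x₁), 2√(1-|x|²)/(1+x₁)). -/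
def gFH (x : E2) : E2 := !₂[2 * x 1 / (1 + x 0), 2 * Real.sqrt (1 - ‖x‖ ^ 2) / (1 + x 0)]

/-- The Funk metric on the disk. -/
def FF (x v : E2) : ℝ :=
  (Real.sqrt ((1 - ‖x‖ ^ 2) * ‖v‖ ^ 2 + (inner ℝ x v : ℝ) ^ 2) + (inner ℝ x v : ℝ)) / (1 - ‖x‖ ^ 2)

/-- w(x) = (2x₁x₂, x₂²-x₁²-4). -/
def wH (x : E2) : E2 := !₂[2 * x 0 * x 1, x 1 ^ 2 - x 0 ^ 2 - 4]

/-- The Finsler-Poincaré metric on the upper half plane. -/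
def FH (x v : E2) : ℝ := ‖v‖ / x 1 + (inner ℝ (wH x) v : ℝ) / (x 1 * (4 + ‖x‖ ^ 2))

/-!
The Funk metric splits as `F_F = K + α`: the Klein metric
`K(x,v) = √((1-|x|²)|v|² + ⟨x,v⟩²)/(1-|x|²)` plus the exact form `α = d(-½ log(1-|x|²))`.
Likewise `F_H = P + β`, with the Poincaré metric `P(z,v) = |v|/z₂` and
`β = d log((4+|z|²)/z₂)`. The map `g` is the classical Klein-to-upper-half-plane isometry
(`g^*P = K`), and since `4 + |g(x)|² = 8/(1+x₁)` and `g₂(x) = 2√(1-|x|²)/(1+x₁)`,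
`log((4+|g|²)/g₂) = log 4 - ½ log(1-|x|²)`, so `g^*β = α`. Both identities are checked
by computing `Dg` explicitly.
-/

open Real RealInnerProductSpace

theorem fderiv_piLp_apply {𝕜 ι H : Type*} {E : ι → Type*} [NontriviallyNormedField 𝕜]
    [NormedAddCommGroup H] [NormedSpace 𝕜 H] [∀ i, NormedAddCommGroup (E i)]
    [∀ i, NormedSpace 𝕜 (E i)] [Fintype ι] (p : ENNReal) [Fact (1 ≤ p)] {f : H → PiLp p E}
    {y : H} (hf : DifferentiableAt 𝕜 f y) (v : H) (i : ι) :
    fderiv 𝕜 f y v i = fderiv 𝕜 (fun x => f x i) y v := by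
  have h := (PiLp.proj p (𝕜 := 𝕜) E i).hasFDerivAt.comp y hf.hasFDerivAt
  exact (congrArg (· v) h.fderiv).symm

lemma EuclideanSpace.one_add_apply_pos {ι : Type*} [Fintype ι] {x : EuclideanSpace ℝ ι}
    (hx : ‖x‖ < 1) (i : ι) : 0 < 1 + x i := by
  have := neg_abs_le (x i)
  have := (Real.norm_eq_abs _).symm.trans_le (PiLp.norm_apply_le x i)
  linarith

lemma one_sub_norm_sq_pos {E : Type*} [SeminormedAddGroup E] {x : E} (hx : ‖x‖ < 1) :
    0 < 1 - ‖x‖ ^ 2 :=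
  sub_pos.2 (pow_lt_one₀ (norm_nonneg x) hx two_ne_zero)

lemma E2.norm_sq_eq (y : E2) : ‖y‖ ^ 2 = y 0 ^ 2 + y 1 ^ 2 := by
  simp [EuclideanSpace.real_norm_sq_eq, Fin.sum_univ_two]

lemma E2.inner_eq (x y : E2) : ⟪x, y⟫ = x 0 * y 0 + x 1 * y 1 := by
  simp [PiLp.inner_apply, Fin.sum_univ_two, mul_comm]

theorem fderiv_gFH_apply {x : E2} (hx : ‖x‖ < 1) (v : E2) :
    fderiv ℝ gFH x v = !₂[2 * ((1 + x 0) * v 1 - x 1 * v 0) / (1 + x 0) ^ 2,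
      -2 * (⟪x, v⟫ * (1 + x 0) + (1 - ‖x‖ ^ 2) * v 0) / (√(1 - ‖x‖ ^ 2) * (1 + x 0) ^ 2)] := by
  have ha := EuclideanSpace.one_add_apply_pos hx 0
  have hq := one_sub_norm_sq_pos hx
  have hinv := (hasDerivAt_inv ha.ne').comp_hasFDerivAt x
    ((PiLp.hasFDerivAt_apply (𝕜 := ℝ) 2 x 0).const_add 1)
  have h0 := ((PiLp.hasFDerivAt_apply (𝕜 := ℝ) 2 x 1).const_mul 2).mul hinv
    |>.congr_of_eventuallyEq (f₁ := fun y => gFH y 0)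
      (.of_forall fun y => by simp [gFH, div_eq_mul_inv])
  have h1 := ((((hasFDerivAt_id x).norm_sq.const_sub 1).sqrt hq.ne').const_mul 2).mul hinv
    |>.congr_of_eventuallyEq (f₁ := fun y => gFH y 1)
      (.of_forall fun y => by simp [gFH, div_eq_mul_inv])
  have hg : DifferentiableAt ℝ gFH x :=
    (differentiableAt_piLp 2).2 (Fin.forall_fin_two.2 ⟨h0.differentiableAt, h1.differentiableAt⟩)
  refine PiLp.ext (Fin.forall_fin_two.2 ⟨?_, ?_⟩) <;> rw [fderiv_piLp_apply 2 hg]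
  · rw [h0.fderiv]
    simp only [Fin.isValue, neg_smul, smul_neg, Function.comp_apply, add_apply, neg_apply,
      smul_apply, PiLp.proj_apply, smul_eq_mul, neg_mul, Matrix.cons_val_zero]
    field_simp
    ring
  · rw [h1.fderiv]
    simp only [id_eq, Fin.isValue, neg_smul, smul_neg, Function.comp_apply, one_div, mul_inv_rev,
      ContinuousLinearMap.comp_id, add_apply, neg_apply, smul_apply, PiLp.proj_apply, smul_eq_mul,
      coe_innerSL_apply, nsmul_eq_mul, Nat.cast_ofNat, neg_mul, Matrix.cons_val_one,
      Matrix.cons_val_fin_one]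
    field_simp
    rw [sq_sqrt hq.le]
    ring

theorem norm_fderiv_gFH_div_gFH_one {x : E2} (hx : ‖x‖ < 1) (v : E2) :
    ‖fderiv ℝ gFH x v‖ / gFH x 1 =
      √((1 - ‖x‖ ^ 2) * ‖v‖ ^ 2 + ⟪x, v⟫ ^ 2) / (1 - ‖x‖ ^ 2) := by
  have ha := EuclideanSpace.one_add_apply_pos hx 0
  have hq := one_sub_norm_sq_pos hx
  have hnorm : ‖fderiv ℝ gFH x v‖ =
      2 * √((1 - ‖x‖ ^ 2) * ‖v‖ ^ 2 + ⟪x, v⟫ ^ 2) / (√(1 - ‖x‖ ^ 2) * (1 + x 0)) := by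
    rw [← sq_eq_sq₀ (norm_nonneg _) (by positivity), E2.norm_sq_eq, fderiv_gFH_apply hx]
    simp only [Fin.isValue, neg_mul, Matrix.cons_val_zero, Matrix.cons_val_one,
      Matrix.cons_val_fin_one]
    field_simp
    rw [sq_sqrt hq.le, sq_sqrt (by positivity), E2.inner_eq, E2.norm_sq_eq x, E2.norm_sq_eq v]
    ring
  rw [hnorm]
  simp only [gFH, Fin.isValue, Matrix.cons_val_one, Matrix.cons_val_fin_one]
  field_simp
  rw [sq_sqrt hq.le]
  ring

theorem inner_wH_gFH_fderiv_div {x : E2} (hx : ‖x‖ < 1) (v : E2) :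
    ⟪wH (gFH x), fderiv ℝ gFH x v⟫ / (gFH x 1 * (4 + ‖gFH x‖ ^ 2)) =
      ⟪x, v⟫ / (1 - ‖x‖ ^ 2) := by
  have ha := EuclideanSpace.one_add_apply_pos hx 0
  have hq := one_sub_norm_sq_pos hx
  rw [E2.norm_sq_eq, fderiv_gFH_apply hx, E2.inner_eq]
  simp only [Fin.isValue, wH, gFH, Matrix.cons_val_zero, Matrix.cons_val_one,
    Matrix.cons_val_fin_one, neg_mul]
  field_simp
  rw [sq_sqrt hq.le, E2.inner_eq, E2.norm_sq_eq x]
  ring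

theorem gFH_isometry (x : E2) (hx : x ∈ Dset) (v : E2) :
    FF x v = FH (gFH x) (fderiv ℝ gFH x v) := by
  rw [FF, FH, add_div, norm_fderiv_gFH_div_gFH_one hx, inner_wH_gFH_fderiv_div hx]
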